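/- With (f_t)_i defined by (f_t)_1(n) = n+1 and (f_t)_{i+1}(n) = (f_t)_i^(⌊n^(1/t)⌋)(n): for all t ≥ 1 and n > 2^t, (f_{t+1})_{2t+3}(n²) > n² + 2n + 1. -/
import Mathlib

/-- Floor of the real `t`-th root of `n`. -/
noncomputable def nroot (t n : ℕ) : ℕ := ⌊(n : ℝ) ^ ((t : ℝ)⁻¹)⌋₊

/-- `(f_t)_i`: `(f_t)_1 (n) = n + 1`, `(f_t)_{i+1} (n) = (f_t)_i^(⌊n^(1/t)⌋) (n)`. -/
noncomputable def ft (t : ℕ) : ℕ → ℕ → ℕ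
  | 0, n => n
  | 1, n => n + 1
  | (i + 2), n => (ft t (i + 1))^[nroot t n] n

lemma nroot_mono (t : ℕ) {a b : ℕ} (h : a ≤ b) : nroot t a ≤ nroot t b := by
  apply Nat.floor_le_floor
  exact Real.rpow_le_rpow (by positivity) (by exact_mod_cast h) (by positivity)

lemma iter_le {f : ℕ → ℕ} (h : ∀ m, m ≤ f m) : ∀ k n, n ≤ f^[k] n
  | 0, n => le_rfl
  | (k+1), n => by
      rw [Function.iterate_succ_apply]
      exact le_trans (h n) (iter_le h k (f n))

lemma ft_le (t : ℕ) : ∀ i n, n ≤ ft t i n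
  | 0, _ => le_rfl
  | 1, n => Nat.le_succ n
  | (i+2), n => iter_le (ft_le t (i+1)) _ n

lemma ft_one_iter (t : ℕ) : ∀ k m, (ft t 1)^[k] m = m + k
  | 0, m => rfl
  | (k+1), m => by
      rw [Function.iterate_succ_apply, ft_one_iter t k (ft t 1 m)]
      show m + 1 + k = m + (k + 1); omega

lemma ft_ge (t : ℕ) : ∀ k m, m + nroot t m ^ (k+1) ≤ ft t (k+2) m
  | 0, m => by
      show m + nroot t m ^ 1 ≤ (ft t 1)^[nroot t m] m
      rw [ft_one_iter, pow_one]
  | (k+1), m => by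
      show m + nroot t m ^ (k+2) ≤ (ft t (k+2))^[nroot t m] m
      have aux : ∀ j, m + j * nroot t m ^ (k+1) ≤ (ft t (k+2))^[j] m := by
        intro j
        induction j with
        | zero => simp
        | succ j ih =>
            rw [Function.iterate_succ_apply']
            have h1 : (ft t (k+2))^[j] m + nroot t ((ft t (k+2))^[j] m) ^ (k+1)
                ≤ ft t (k+2) ((ft t (k+2))^[j] m) := ft_ge t k _
            have h2 : m ≤ (ft t (k+2))^[j] m := iter_le (ft_le t (k+2)) j m
            have h3 : nroot t m ^ (k+1) ≤ nroot t ((ft t (k+2))^[j] m) ^ (k+1) :=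
              Nat.pow_le_pow_left (nroot_mono t h2) _
            calc m + (j+1) * nroot t m ^ (k+1)
                = (m + j * nroot t m ^ (k+1)) + nroot t m ^ (k+1) := by ring
              _ ≤ (ft t (k+2))^[j] m + nroot t ((ft t (k+2))^[j] m) ^ (k+1) :=
                  Nat.add_le_add ih h3
              _ ≤ _ := h1
      calc m + nroot t m ^ (k+2) = m + nroot t m * nroot t m ^ (k+1) := by ring
        _ ≤ _ := aux (nroot t m)

theorem stmt7 (t n : ℕ) (ht : 1 ≤ t) (hn : 2 ^ t < n) :
    n ^ 2 + 2 * n + 1 < ft (t + 1) (2 * t + 3) (n ^ 2) := by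
  set r := nroot (t+1) (n^2) with hr
  have hmain : n^2 + r ^ (2*t+2) ≤ ft (t+1) (2*t+3) (n^2) := by
    have := ft_ge (t+1) (2*t+1) (n^2)
    convert this using 3
  have hn3 : 3 ≤ n := by
    have : 2 ≤ 2 ^ t := Nat.one_lt_two_pow (by omega)
    omega
  -- n² < 2^(t+1) ≤ ... facts
  have hx0 : (0:ℝ) ≤ ((n^2 : ℕ) : ℝ) ^ (((t+1:ℕ) : ℝ))⁻¹ := by positivity
  have hpow : (((n^2 : ℕ) : ℝ) ^ (((t+1:ℕ) : ℝ))⁻¹) ^ (t+1) = ((n^2 : ℕ) : ℝ) :=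
    Real.rpow_inv_natCast_pow (by positivity) (by omega)
  -- r ≥ 2
  have hr2 : 2 ≤ r := by
    rw [hr, nroot]
    apply Nat.le_floor
    have h2n : (2:ℕ)^(t+1) ≤ n^2 := by
      have h1 : 2^t * 2 ≤ 2^t * 2^t := Nat.mul_le_mul_left _ (Nat.one_lt_two_pow (by omega))
      have h2 : 2^t * 2^t ≤ n * n := Nat.mul_le_mul (le_of_lt hn) (le_of_lt hn)
      calc 2^(t+1) = 2^t * 2 := by ring
        _ ≤ n * n := le_trans h1 h2
        _ = n^2 := by ring
    have h2r : ((2:ℕ)^(t+1) : ℝ) ≤ ((n^2 : ℕ) : ℝ) := by exact_mod_cast h2n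
    have h2eq : ((2:ℝ)^(t+1)) ^ (((t+1:ℕ):ℝ))⁻¹ = 2 := by
      rw [← Real.rpow_natCast (2:ℝ) (t+1), ← Real.rpow_mul (by norm_num),
        mul_inv_cancel₀ (by positivity), Real.rpow_one]
    have hfin : (2:ℝ) ≤ ((n^2:ℕ):ℝ) ^ (((t+1:ℕ):ℝ))⁻¹ := by
      rw [← h2eq]
      refine Real.rpow_le_rpow (by positivity) ?_ (by positivity)
      exact_mod_cast h2n
    exact_mod_cast hfin
  -- n² < (r+1)^(t+1)
  have hfloor : ((n^2 : ℕ) : ℝ) ^ (((t+1:ℕ) : ℝ))⁻¹ < r + 1 := by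
    rw [hr, nroot]; push_cast
    exact Nat.lt_floor_add_one _
  have hlt : (n:ℕ)^2 < (r+1)^(t+1) := by
    have : ((n^2 : ℕ) : ℝ) < ((r:ℝ)+1)^(t+1) := by
      calc ((n^2 : ℕ) : ℝ) = (((n^2 : ℕ) : ℝ) ^ (((t+1:ℕ) : ℝ))⁻¹) ^ (t+1) := hpow.symm
        _ < ((r:ℝ)+1)^(t+1) := by
            apply pow_lt_pow_left₀ hfloor hx0 (by omega)
    exact_mod_cast this
  have hsq : (r+1)^(t+1) ≤ r^(2*t+2) := by
    calc (r+1)^(t+1) ≤ (r^2)^(t+1) := Nat.pow_le_pow_left (by nlinarith) _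
      _ = r^(2*t+2) := by rw [← pow_mul]; ring_nf
  have : 2*n + 1 < r^(2*t+2) := by nlinarith
  omega
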